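/- For all integers k ≥ 3 and ℓ ≥ 3, every finite set of at least (ℓ−3)·C(ES(k)−1, 2) + ES(k) points in the plane contains ℓ collinear points or k points in strictly convex position; equivalently, ES(k,ℓ) ≤ (ℓ−3)·C(ES(k)−1, 2) + ES(k). -/

import Mathlib

noncomputable section

/-- A point in the plane. -/
abbrev Pt : Type := EuclideanSpace ℝ (Fin 2)

noncomputable instance : DecidableEq Pt := Classical.decEq _

/-- A finite point set is in general position if no three of its points are collinear. -/
def GenPos (P : Finset Pt) : Prop :=
  ∀ S ⊆ P, S.card = 3 → ¬ Collinear ℝ (S : Set Pt)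

/-- A finite point set is in convex position if every point lies on the boundary
of the convex hull of the set. -/
def ConvexPos (P : Finset Pt) : Prop :=
  ∀ p ∈ P, p ∈ frontier (convexHull ℝ (P : Set Pt))

/-- `v` is a corner of `P` if removing it changes the convex hull. -/
def IsCornerOf (P : Finset Pt) (v : Pt) : Prop :=
  convexHull ℝ ((P : Set Pt) \ {v}) ≠ convexHull ℝ (P : Set Pt)

/-- A finite point set is in strictly convex position if each of its points is a corner. -/
def StrictConvexPos (P : Finset Pt) : Prop :=
  ∀ v ∈ P, IsCornerOf P v

/-- `P` contains `k` points in convex position. -/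
def HasConvex (P : Finset Pt) (k : ℕ) : Prop :=
  ∃ S ⊆ P, S.card = k ∧ ConvexPos S

/-- `P` contains `k` points in strictly convex position. -/
def HasStrictConvex (P : Finset Pt) (k : ℕ) : Prop :=
  ∃ S ⊆ P, S.card = k ∧ StrictConvexPos S

/-- `P` contains `l` collinear points. -/
def HasCollinear (P : Finset Pt) (l : ℕ) : Prop :=
  ∃ S ⊆ P, S.card = l ∧ Collinear ℝ (S : Set Pt)

/-- The Erdős–Szekeres number: the least `n` such that every finite set of at least `n`
points in general position contains `k` points in convex position. -/
def ES (k : ℕ) : ℕ :=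
  sInf {n : ℕ | ∀ P : Finset Pt, GenPos P → n ≤ P.card → HasConvex P k}

/-- `X` is a `k`-hole of `P`: `k` points of `P` in strictly convex position whose
convex hull contains no other point of `P`. -/
def IsHole (P X : Finset Pt) (k : ℕ) : Prop :=
  X ⊆ P ∧ X.card = k ∧ StrictConvexPos X ∧
    convexHull ℝ (X : Set Pt) ∩ (P : Set Pt) = (X : Set Pt)

/-- `v` and `w` are visible with respect to `P`. -/
def Visible (P : Finset Pt) (v w : Pt) : Prop :=
  v ≠ w ∧ (P : Set Pt) ∩ segment ℝ v w = {v, w}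

end

/-!
Without `ℓ` collinear points, a general-position subset can be grown greedily: two chosen points
span a line carrying at most `ℓ - 3` further points of `P`, so a chosen set of size `m` blocks at
most `m + (ℓ - 3) C(m, 2)` points, and `P` contains `ES(k)` points in general position. These
contain `k` points in convex position, and in general position convex position is strict: a point
in the convex hull of the others is, by Carathéodory, in the interior of a triangle of them or on a
segment between two of them.

That `ES(k)` is finite comes from Ramsey's theorem for triples, coloured by the orientation of the
triple read from left to right: a monochromatic set is a cup or a cap, hence in convex position.
-/

open Finset

namespace Finset

section DecidableEq

variable {α : Type*} [DecidableEq α]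

theorem forall_mem_powersetCard_succ_insert {Q : Finset α → Prop} {v : α} {S : Finset α}
    (hv : v ∉ S) (r : ℕ) :
    (∀ T ∈ (insert v S).powersetCard (r + 1), Q T) ↔
      (∀ T ∈ S.powersetCard (r + 1), Q T) ∧ ∀ e ∈ S.powersetCard r, Q (insert v e) := by
  simp only [powersetCard_succ_insert hv, mem_union, mem_image, or_imp, forall_and,
    forall_exists_index, and_imp, forall_apply_eq_imp_iff₂]

end DecidableEq

section LinearOrder

variable {α : Type*} [LinearOrder α]

theorem exists_adjacent_pair_of_mem {S : Finset α} {p : α} (hp : p ∈ S) (hS : 2 ≤ #S) :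
    ∃ u ∈ S, ∃ v ∈ S, u < v ∧ (p = u ∨ p = v) ∧ ∀ x ∈ S, x ≤ u ∨ v ≤ x := by
  by_cases h : ∃ q ∈ S, p < q
  · obtain ⟨q, hq, hpq⟩ := h
    have hne : (S.filter (p < ·)).Nonempty := ⟨q, mem_filter.2 ⟨hq, hpq⟩⟩
    obtain ⟨hvS, hpv⟩ := mem_filter.1 (min'_mem _ hne)
    refine ⟨p, hp, _, hvS, hpv, .inl rfl, fun x hx => ?_⟩
    rcases le_or_gt x p with hxp | hpx
    · exact .inl hxp
    · exact .inr (min'_le _ _ (mem_filter.2 ⟨hx, hpx⟩))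
  · push Not at h
    have hne : (S.erase p).Nonempty := by
      rw [← card_pos, card_erase_of_mem hp]
      omega
    obtain ⟨hup, huS⟩ := mem_erase.1 (max'_mem _ hne)
    refine ⟨_, huS, p, hp, lt_of_le_of_ne (h _ huS) hup, .inr rfl, fun x hx => ?_⟩
    by_cases hxp : x = p
    · exact .inr hxp.ge
    · exact .inl (le_max' _ _ (mem_erase.2 ⟨hxp, hx⟩))

end LinearOrder

end Finset

theorem Set.eq_of_triple_eq_triple {α : Type*} [LinearOrder α] {a b c a' b' c' : α} (hab : a < b)
    (hbc : b < c) (hab' : a' < b') (hbc' : b' < c') (h : ({a, b, c} : Set α) = {a', b', c'}) :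
    a' = a ∧ b' = b ∧ c' = c := by
  have hmem : ∀ x ∈ ({a', b', c'} : Set α), x = a ∨ x = b ∨ x = c := by simp [← h]
  rcases hmem a' (by simp) with rfl | rfl | rfl <;>
    rcases hmem b' (by simp) with rfl | rfl | rfl <;>
    rcases hmem c' (by simp) with rfl | rfl | rfl <;>
    first | exact ⟨rfl, rfl, rfl⟩ | order

/-- An upper bound for the hypergraph Ramsey number `R_r(s, t)`. -/
def ramseyBound : ℕ → ℕ → ℕ → ℕ
  | 0, s, t => max s t
  | _ + 1, 0, _ => 0
  | _ + 1, _ + 1, 0 => 0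
  | r + 1, s + 1, t + 1 =>
    ramseyBound r (ramseyBound (r + 1) s (t + 1)) (ramseyBound (r + 1) (s + 1) t) + 1

section Ramsey

variable {α : Type*} [DecidableEq α]

theorem exists_homogeneous_of_ramseyBound_le (r s t : ℕ) (c : Finset α → Prop) (V : Finset α)
    (hV : ramseyBound r s t ≤ #V) :
    ∃ S ⊆ V, (#S = s ∧ ∀ T ∈ S.powersetCard r, c T) ∨
      (#S = t ∧ ∀ T ∈ S.powersetCard r, ¬ c T) := by
  induction r, s, t using ramseyBound.induct generalizing c V with
  | case1 s t =>
    rw [ramseyBound] at hV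
    simp only [powersetCard_zero, mem_singleton, forall_eq]
    by_cases h : c ∅
    · obtain ⟨S, hSV, hS⟩ := exists_subset_card_eq (le_of_max_le_left hV)
      exact ⟨S, hSV, .inl ⟨hS, h⟩⟩
    · obtain ⟨S, hSV, hS⟩ := exists_subset_card_eq (le_of_max_le_right hV)
      exact ⟨S, hSV, .inr ⟨hS, h⟩⟩
  | case2 r t => exact ⟨∅, empty_subset V, .inl ⟨rfl, by simp⟩⟩
  | case3 r s => exact ⟨∅, empty_subset V, .inr ⟨rfl, by simp⟩⟩
  | case4 r s t ihs iht ihr =>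
    rw [ramseyBound] at hV
    obtain ⟨v, hv⟩ : V.Nonempty := card_pos.1 (by omega)
    have hvV : #(V.erase v) = #V - 1 := card_erase_of_mem hv
    obtain ⟨M, hMV, hM⟩ := ihr (fun e => c (insert v e)) (V.erase v) (by omega)
    have hvM : v ∉ M := fun h => notMem_erase v V (hMV h)
    have hMV' : M ⊆ V := hMV.trans (erase_subset v V)
    have extend : ∀ {Q : Finset α → Prop}, (∀ e ∈ M.powersetCard r, Q (insert v e)) →
        ∀ S ⊆ M, (∀ T ∈ S.powersetCard (r + 1), Q T) → insert v S ⊆ V ∧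
          #(insert v S) = #S + 1 ∧ ∀ T ∈ (insert v S).powersetCard (r + 1), Q T :=
      fun hlink S hSM hS => ⟨insert_subset hv (hSM.trans hMV'),
        card_insert_of_notMem fun h => hvM (hSM h),
        (forall_mem_powersetCard_succ_insert (fun h => hvM (hSM h)) r).2
          ⟨hS, fun e he => hlink e (powersetCard_mono hSM he)⟩⟩
    rcases hM with ⟨hMcard, hlink⟩ | ⟨hMcard, hlink⟩
    · obtain ⟨S, hSM, hS | hS⟩ := ihs c M hMcard.ge
      · obtain ⟨hSV, hcard, hhom⟩ := extend hlink S hSM hS.2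
        exact ⟨insert v S, hSV, .inl ⟨hcard.trans (congrArg (· + 1) hS.1), hhom⟩⟩
      · exact ⟨S, hSM.trans hMV', .inr hS⟩
    · obtain ⟨S, hSM, hS | hS⟩ := iht c M hMcard.ge
      · exact ⟨S, hSM.trans hMV', .inl hS⟩
      · obtain ⟨hSV, hcard, hhom⟩ := extend hlink S hSM hS.2
        exact ⟨insert v S, hSV, .inr ⟨hcard.trans (congrArg (· + 1) hS.1), hhom⟩⟩

end Ramsey

theorem mem_frontier_convexHull_of_forall_le {E : Type*} [NormedAddCommGroup E] [NormedSpace ℝ E]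
    {s : Set E} {p : E} (hp : p ∈ s) {φ : StrongDual ℝ E} (hφ : φ ≠ 0)
    (hle : ∀ x ∈ s, φ x ≤ φ p) : p ∈ frontier (convexHull ℝ s) := by
  have hhull : convexHull ℝ s ⊆ {x | φ x ≤ φ p} :=
    convexHull_min hle (convex_halfSpace_le φ.isLinear (φ p))
  refine ⟨subset_closure (subset_convexHull ℝ s hp), fun hint => hφ ?_⟩
  have hmax : IsLocalMax φ p :=
    Filter.mem_of_superset (mem_interior_iff_mem_nhds.1 hint) hhull
  exact hmax.hasFDerivAt_eq_zero φ.hasFDerivAt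

theorem AffineIndependent.sum_smul_mem_interior_convexHull {ι V : Type*} [Fintype ι]
    [NormedAddCommGroup V] [NormedSpace ℝ V] [FiniteDimensional ℝ V] {z : ι → V}
    (hz : AffineIndependent ℝ z) (hcard : Fintype.card ι = Module.finrank ℝ V + 1) {w : ι → ℝ}
    (hw0 : ∀ i, 0 < w i) (hw1 : ∑ i, w i = 1) :
    ∑ i, w i • z i ∈ interior (convexHull ℝ (Set.range z)) := by
  let b : AffineBasis ι ℝ V := ⟨z, hz, hz.affineSpan_eq_top_iff_card_eq_finrank_add_one.2 hcard⟩
  have hb : ⇑b = z := rfl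
  rw [← hb, b.interior_convexHull, ← Finset.univ.affineCombination_eq_linear_combination _ _ hw1]
  intro i
  rw [b.coord_apply_combination_of_mem (Finset.mem_univ i) hw1]
  exact hw0 i

theorem Collinear.affineSpan {k V P : Type*} [DivisionRing k] [AddCommGroup V] [Module k V]
    [AddTorsor V P] {s : Set P} (h : Collinear k s) : Collinear k (affineSpan k s : Set P) := by
  rwa [Collinear, ← AffineSubspace.direction_eq_vectorSpan, direction_affineSpan]

/-- Twice the signed area of the triangle `abc`; positive iff `a, b, c` turn counterclockwise. -/
def cross (a b c : Pt) : ℝ :=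
  (b 0 - a 0) * (c 1 - a 1) - (b 1 - a 1) * (c 0 - a 0)

theorem cross_cyclic (a b c : Pt) : cross a b c = cross b c a := by
  unfold cross; ring

theorem cross_self_left (a b : Pt) : cross a b a = 0 := by
  unfold cross; ring

theorem cross_self_right (a b : Pt) : cross a b b = 0 := by
  unfold cross; ring

theorem collinear_of_cross_eq_zero {a b c : Pt} (h : cross a b c = 0) :
    Collinear ℝ ({a, b, c} : Set Pt) := by
  by_cases hab : a = b
  · rw [hab, Set.insert_eq_of_mem (Set.mem_insert b {c})]
    exact collinear_pair ℝ b c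
  have hn : (b 0 - a 0) ^ 2 + (b 1 - a 1) ^ 2 ≠ 0 := by
    intro h0
    refine hab (PiLp.ext (Fin.forall_fin_two.2 ⟨?_, ?_⟩)) <;>
      nlinarith [sq_nonneg (b 0 - a 0), sq_nonneg (b 1 - a 1)]
  -- `c` is the orthogonal projection of itself onto the line `ab`
  have hc : AffineMap.lineMap a b
      (((c 0 - a 0) * (b 0 - a 0) + (c 1 - a 1) * (b 1 - a 1)) /
        ((b 0 - a 0) ^ 2 + (b 1 - a 1) ^ 2)) = c := by
    unfold cross at h
    refine PiLp.ext (Fin.forall_fin_two.2 ⟨?_, ?_⟩) <;>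
      simp only [AffineMap.lineMap_apply_module, PiLp.add_apply, PiLp.smul_apply, smul_eq_mul] <;>
      field_simp
    · linear_combination (b 1 - a 1) * h
    · linear_combination (a 0 - b 0) * h
  have hcol :=
    collinear_insert_of_mem_affineSpan_pair (hc ▸ AffineMap.lineMap_mem_affineSpan_pair _ a b)
  rwa [Set.insert_comm, Set.pair_comm] at hcol

theorem mem_frontier_convexHull_of_cross_nonneg {s : Set Pt} {u v p : Pt} {σ : ℝ} (hp : p ∈ s)
    (hp0 : cross u v p = 0) (hs : ∀ x ∈ s, 0 ≤ σ * cross u v x)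
    (hq : ∃ q ∈ s, 0 < σ * cross u v q) : p ∈ frontier (convexHull ℝ s) := by
  let φ : StrongDual ℝ Pt :=
    σ • ((v 1 - u 1) • EuclideanSpace.proj 0 - (v 0 - u 0) • EuclideanSpace.proj 1)
  have hφ : ∀ x, φ x = φ u - σ * cross u v x := by
    intro x
    simp only [φ, cross, smul_apply, sub_apply, PiLp.proj_apply, smul_eq_mul]
    ring
  obtain ⟨q, hqs, hq⟩ := hq
  refine mem_frontier_convexHull_of_forall_le (φ := φ) hp (fun h0 => ?_) fun x hx => ?_
  · have := hφ q
    simp only [h0, zero_apply] at this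
    linarith
  · rw [hφ x, hφ p, hp0]
    linarith [hs x hx]

theorem genPos_iff_forall_mem_powersetCard {S : Finset Pt} :
    GenPos S ↔ ∀ T ∈ S.powersetCard 3, ¬ Collinear ℝ (T : Set Pt) := by
  simp only [GenPos, mem_powersetCard, and_imp]

namespace GenPos

variable {S : Finset Pt}

theorem mono {T : Finset Pt} (hS : GenPos S) (hTS : T ⊆ S) : GenPos T :=
  fun U hUT hU => hS U (hUT.trans hTS) hU

theorem not_collinear (hS : GenPos S) {a b c : Pt} (ha : a ∈ S) (hb : b ∈ S) (hc : c ∈ S)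
    (hab : a ≠ b) (hac : a ≠ c) (hbc : b ≠ c) : ¬ Collinear ℝ ({a, b, c} : Set Pt) := by
  have h := hS {a, b, c} (by simp [insert_subset_iff, ha, hb, hc])
    (card_eq_three.2 ⟨a, b, c, hab, hac, hbc, rfl⟩)
  rwa [coe_insert, coe_pair] at h

theorem cross_ne_zero (hS : GenPos S) {a b c : Pt} (ha : a ∈ S) (hb : b ∈ S) (hc : c ∈ S)
    (hab : a ≠ b) (hac : a ≠ c) (hbc : b ≠ c) : cross a b c ≠ 0 :=
  fun h => hS.not_collinear ha hb hc hab hac hbc (collinear_of_cross_eq_zero h)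

end GenPos

theorem ConvexPos.strictConvexPos {S : Finset Pt} (hconv : ConvexPos S) (hgen : GenPos S) :
    StrictConvexPos S := by
  intro v hv hcorner
  have hvS : v ∈ convexHull ℝ ((S : Set Pt) \ {v}) := hcorner ▸ subset_convexHull ℝ _ hv
  obtain ⟨ι, _, z, w, hzS, hz, hw0, hw1, hwv⟩ := eq_pos_convex_span_of_mem_convexHull hvS
  have hzv : ∀ i, z i ≠ v := fun i => (hzS ⟨i, rfl⟩).2
  have hzmem : ∀ i, z i ∈ S := fun i => (hzS ⟨i, rfl⟩).1
  have hcard : Fintype.card ι ≤ 3 := by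
    have h := Submodule.finrank_le (vectorSpan ℝ (Set.range z))
    rw [finrank_euclideanSpace_fin] at h
    linarith [hz.card_le_finrank_succ]
  have hne : Nonempty ι := by
    by_contra h
    rw [not_nonempty_iff] at h
    simp at hw1
  obtain h1 | h2 | h3 : Fintype.card ι = 1 ∨ Fintype.card ι = 2 ∨ Fintype.card ι = 3 := by
    have := Fintype.card_pos (α := ι)
    omega
  · obtain ⟨_⟩ := Fintype.card_eq_one_iff_nonempty_unique.1 h1
    simp only [Fintype.sum_unique] at hw1 hwv
    rw [hw1, one_smul] at hwv
    exact hzv _ hwv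
  · obtain ⟨x, y, hxy, huniv⟩ := Nat.card_eq_two_iff.1 (Nat.card_eq_fintype_card.trans h2)
    have hrange : Set.range z = {z x, z y} := by
      rw [← Set.image_univ, ← huniv, Set.image_pair]
    have hvz : v ∈ convexHull ℝ (Set.range z) := hwv ▸ (convex_convexHull ℝ _).sum_mem
      (fun i _ => (hw0 i).le) hw1 fun i _ => subset_convexHull ℝ _ ⟨i, rfl⟩
    have hline : v ∈ line[ℝ, z x, z y] := hrange ▸ convexHull_subset_affineSpan _ hvz
    exact hgen.not_collinear hv (hzmem x) (hzmem y) (hzv x).symm (hzv y).symm (hz.injective.ne hxy)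
      (collinear_insert_of_mem_affineSpan_pair hline)
  · have hint := hz.sum_smul_mem_interior_convexHull (by simpa using h3) hw0 hw1
    rw [hwv] at hint
    refine (hconv v hv).2 (interior_mono (convexHull_mono ?_) hint)
    rintro _ ⟨i, rfl⟩
    exact hzmem i

noncomputable abbrev Pt.lexOrder : LinearOrder Pt :=
  LinearOrder.lift' (fun p => toLex (p 0, p 1)) fun _ _ h =>
    PiLp.ext (Fin.forall_fin_two.2 (Prod.ext_iff.1 (toLex.injective h)))

section LexOrder

attribute [local instance] Pt.lexOrder

/-- `S` is a cup (for `σ > 0`) or a cap (for `σ < 0`). -/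
def OrientedChain (σ : ℝ) (S : Finset Pt) : Prop :=
  ∀ a ∈ S, ∀ b ∈ S, ∀ c ∈ S, a < b → b < c → 0 < σ * cross a b c

theorem OrientedChain.convexPos {σ : ℝ} {S : Finset Pt} (hS : OrientedChain σ S) (h3 : 3 ≤ #S) :
    ConvexPos S := by
  intro p hp
  obtain ⟨u, hu, v, hv, huv, hpuv, hsep⟩ := exists_adjacent_pair_of_mem hp (by omega)
  have hpos : ∀ x ∈ S, x ≠ u → x ≠ v → 0 < σ * cross u v x := by
    intro x hx hxu hxv
    rcases hsep x hx with hxu' | hvx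
    · rw [cross_cyclic, cross_cyclic]
      exact hS x hx u hu v hv (lt_of_le_of_ne hxu' hxu) huv
    · exact hS u hu v hv x hx huv (lt_of_le_of_ne hvx (Ne.symm hxv))
  obtain ⟨q, hq, hqv⟩ := exists_mem_ne (s := S.erase u) (by rw [card_erase_of_mem hu]; omega) v
  refine mem_frontier_convexHull_of_cross_nonneg (mem_coe.2 hp) ?_ (fun x hx => ?_)
    ⟨q, mem_of_mem_erase hq, hpos q (mem_of_mem_erase hq) (ne_of_mem_erase hq) hqv⟩
  · rcases hpuv with rfl | rfl
    exacts [cross_self_left _ _, cross_self_right _ _]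
  · by_cases hxu : x = u
    · simp [hxu, cross_self_left]
    by_cases hxv : x = v
    · simp [hxv, cross_self_right]
    exact (hpos x hx hxu hxv).le

theorem hasConvex_of_ramseyBound_le {k : ℕ} (hk : 3 ≤ k) {P : Finset Pt} (hP : GenPos P)
    (hcard : ramseyBound 3 k k ≤ #P) : HasConvex P k := by
  have htriple : ∀ {S : Finset Pt} {a b c : Pt}, a ∈ S → b ∈ S → c ∈ S → a < b → b < c →
      ({a, b, c} : Finset Pt) ∈ S.powersetCard 3 := fun ha hb hc hab hbc =>
    mem_powersetCard.2 ⟨by simp [insert_subset_iff, ha, hb, hc],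
      card_eq_three.2 ⟨_, _, _, hab.ne, (hab.trans hbc).ne, hbc.ne, rfl⟩⟩
  obtain ⟨S, hSP, ⟨hSk, hS⟩ | ⟨hSk, hS⟩⟩ := exists_homogeneous_of_ramseyBound_le 3 k k
    (fun T => ∃ a b c, a < b ∧ b < c ∧ (T : Set Pt) = {a, b, c} ∧ 0 < cross a b c) P hcard
  · refine ⟨S, hSP, hSk, OrientedChain.convexPos (σ := 1) (fun a ha b hb c hc hab hbc => ?_)
      (by omega)⟩
    obtain ⟨a', b', c', hab', hbc', heq, hpos⟩ := hS _ (htriple ha hb hc hab hbc)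
    obtain ⟨rfl, rfl, rfl⟩ := Set.eq_of_triple_eq_triple hab hbc hab' hbc' (by simpa using heq)
    simpa using hpos
  · refine ⟨S, hSP, hSk, OrientedChain.convexPos (σ := -1) (fun a ha b hb c hc hab hbc => ?_)
      (by omega)⟩
    have hnpos : ¬ 0 < cross a b c := fun h =>
      hS _ (htriple ha hb hc hab hbc) ⟨a, b, c, hab, hbc, by push_cast; rfl, h⟩
    have hne := (hP.mono hSP).cross_ne_zero ha hb hc hab.ne (hab.trans hbc).ne hbc.ne
    linarith [lt_of_le_of_ne (not_lt.1 hnpos) hne]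

end LexOrder

theorem hasConvex_of_ES_le {k : ℕ} (hk : 3 ≤ k) {P : Finset Pt} (hP : GenPos P)
    (hcard : ES k ≤ #P) : HasConvex P k :=
  Nat.sInf_mem (s := {n | ∀ P : Finset Pt, GenPos P → n ≤ #P → HasConvex P k})
    ⟨ramseyBound 3 k k, fun _ hQ hQcard => hasConvex_of_ramseyBound_le hk hQ hQcard⟩ P hP hcard

theorem card_lt_of_collinear {P T : Finset Pt} {l : ℕ} (hno : ¬ HasCollinear P l) (hTP : T ⊆ P)
    (hT : Collinear ℝ (T : Set Pt)) : #T < l := by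
  by_contra! h
  obtain ⟨U, hUT, hU⟩ := exists_subset_card_eq h
  exact hno ⟨U, hUT.trans hTP, hU, hT.subset (coe_subset.2 hUT)⟩

open Classical in
theorem card_filter_mem_line_lt {P : Finset Pt} {l : ℕ} (hno : ¬ HasCollinear P l) (a b : Pt) :
    #(P.filter (· ∈ line[ℝ, a, b])) < l :=
  card_lt_of_collinear hno (filter_subset _ P)
    ((collinear_pair ℝ a b).affineSpan.subset fun _ hx => (mem_filter.1 hx).2)

open Classical in
theorem exists_insert_genPos {P Q : Finset Pt} {l : ℕ} (hno : ¬ HasCollinear P l) (hQP : Q ⊆ P)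
    (hQ : GenPos Q) (hcard : #Q + (l - 3) * (#Q).choose 2 < #P) :
    ∃ p ∈ P, p ∉ Q ∧ GenPos (insert p Q) := by
  let L : Finset Pt → Finset Pt := fun e => P.filter (· ∈ affineSpan ℝ (e : Set Pt)) \ e
  have hL : ∀ e ∈ Q.powersetCard 2, #(L e) ≤ l - 3 := by
    intro e he
    obtain ⟨heQ, he2⟩ := mem_powersetCard.1 he
    obtain ⟨a, b, -, rfl⟩ := card_eq_two.1 he2
    have hline := card_filter_mem_line_lt hno a b
    have hab : {a, b} ⊆ P.filter (· ∈ line[ℝ, a, b]) := by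
      simp only [insert_subset_iff, singleton_subset_iff, mem_filter] at heQ ⊢
      exact ⟨⟨hQP heQ.1, left_mem_affineSpan_pair ℝ a b⟩,
        ⟨hQP heQ.2, right_mem_affineSpan_pair ℝ a b⟩⟩
    simp only [L, coe_pair, card_sdiff_of_subset hab]
    omega
  let F := Q ∪ (Q.powersetCard 2).biUnion L
  have hF : #F < #P := calc
    #F ≤ #Q + ∑ e ∈ Q.powersetCard 2, #(L e) :=
      (card_union_le _ _).trans (Nat.add_le_add_left card_biUnion_le _)
    _ ≤ #Q + (l - 3) * (#Q).choose 2 := by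
      grw [sum_le_card_nsmul _ _ _ hL, card_powersetCard, smul_eq_mul, mul_comm]
    _ < #P := hcard
  obtain ⟨p, hpP, hpF⟩ := exists_mem_notMem_of_card_lt_card hF
  have hpQ : p ∉ Q := fun h => hpF (mem_union_left _ h)
  refine ⟨p, hpP, hpQ, genPos_iff_forall_mem_powersetCard.2 <|
    (forall_mem_powersetCard_succ_insert hpQ 2).2
      ⟨genPos_iff_forall_mem_powersetCard.1 hQ, fun e he hcol => hpF ?_⟩⟩
  obtain ⟨heQ, he2⟩ := mem_powersetCard.1 he
  obtain ⟨a, b, hab, rfl⟩ := card_eq_two.1 he2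
  rw [coe_insert, coe_pair] at hcol
  have hpline : p ∈ line[ℝ, a, b] :=
    hcol.mem_affineSpan_of_mem_of_ne (by simp) (by simp) (by simp) hab
  refine mem_union_right _ (mem_biUnion.2 ⟨{a, b}, he, mem_sdiff.2 ⟨?_, fun h => hpQ (heQ h)⟩⟩)
  simpa [hpP] using hpline

theorem exists_genPos_subset {P : Finset Pt} {l : ℕ} (hno : ¬ HasCollinear P l) (m : ℕ)
    (hm : (l - 3) * (m - 1).choose 2 + m ≤ #P) : ∃ Q ⊆ P, #Q = m ∧ GenPos Q := by
  induction m with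
  | zero => exact ⟨∅, empty_subset P, rfl, fun T hT hT3 => by simp_all⟩
  | succ m ih =>
    rw [Nat.add_sub_cancel] at hm
    have hchoose : (l - 3) * (m - 1).choose 2 ≤ (l - 3) * m.choose 2 :=
      Nat.mul_le_mul_left _ (Nat.choose_le_choose 2 (Nat.sub_le m 1))
    obtain ⟨Q, hQP, rfl, hQ⟩ := ih (by omega)
    obtain ⟨p, hpP, hpQ, hgen⟩ := exists_insert_genPos hno hQP hQ (by omega)
    exact ⟨insert p Q, insert_subset hpP hQP, card_insert_of_notMem hpQ, hgen⟩

theorem stmt12_general (k l : ℕ) (hk : 3 ≤ k)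
    (P : Finset Pt) (hP : (l - 3) * (ES k - 1).choose 2 + ES k ≤ P.card) :
    HasCollinear P l ∨ HasStrictConvex P k := by
  by_cases hcol : HasCollinear P l
  · exact .inl hcol
  obtain ⟨Q, hQP, hQcard, hQ⟩ := exists_genPos_subset hcol (ES k) hP
  obtain ⟨S, hSQ, hSk, hS⟩ := hasConvex_of_ES_le hk hQ hQcard.ge
  exact .inr ⟨S, hSQ.trans hQP, hSk, hS.strictConvexPos (hQ.mono hSQ)⟩

theorem stmt12 (k l : ℕ) (hk : 3 ≤ k) (hl : 3 ≤ l)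
    (P : Finset Pt) (hP : (l - 3) * (ES k - 1).choose 2 + ES k ≤ P.card) :
    HasCollinear P l ∨ HasStrictConvex P k :=
  stmt12_general k l hk P hP
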